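/- The left-handed realization operators X̂_L^0 : f ↦ x^0 f + θ Σ_{ν=0}^d x^ν ∂_ν f and X̂_L^k : f ↦ x^k f (k = 1,…,d), regarded as linear operators on A, satisfy the κ-Minkowski relations: X̂_L^0 ∘ X̂_L^k − X̂_L^k ∘ X̂_L^0 = θ · X̂_L^k, and X̂_L^k ∘ X̂_L^l = X̂_L^l ∘ X̂_L^k for all k, l ∈ {1,…,d}. -/
import Mathlib


open MvPolynomial

/-- The left-handed realization operator `X̂_L⁰ : f ↦ x⁰ f + θ Σ_ν x^ν ∂_ν f`. -/
noncomputable def XL0 (d : ℕ) (θ : ℝ)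
    (f : MvPolynomial (Fin (d + 1)) ℝ) : MvPolynomial (Fin (d + 1)) ℝ :=
  X 0 * f + θ • ∑ ν : Fin (d + 1), X ν * pderiv ν f

/-- The left-handed realization operator `X̂_L^k : f ↦ x^k f` for `k = 1,…,d`. -/
noncomputable def XLk (d : ℕ) (k : Fin d)
    (f : MvPolynomial (Fin (d + 1)) ℝ) : MvPolynomial (Fin (d + 1)) ℝ :=
  X k.succ * f

/-- the left-handed realization operators satisfy the κ-Minkowski
relations `X̂_L⁰ ∘ X̂_L^k − X̂_L^k ∘ X̂_L⁰ = θ·X̂_L^k` and `X̂_L^k ∘ X̂_L^l = X̂_L^l ∘ X̂_L^k`. -/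
theorem left_realization_kappaMinkowski (d : ℕ) (hd : 1 ≤ d) (θ : ℝ) :
    (∀ k : Fin d, ∀ f : MvPolynomial (Fin (d + 1)) ℝ,
      XL0 d θ (XLk d k f) - XLk d k (XL0 d θ f) = θ • XLk d k f) ∧
    (∀ k l : Fin d, ∀ f : MvPolynomial (Fin (d + 1)) ℝ,
      XLk d k (XLk d l f) = XLk d l (XLk d k f)) := by
  constructor
  · intro k f
    have h : ∀ ν : Fin (d+1), X ν * pderiv ν (X k.succ * f)
        = (if ν = k.succ then X k.succ * f else 0) + X k.succ * (X ν * pderiv ν f) := by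
      intro ν
      rw [pderiv_mul, pderiv_X]
      by_cases hν : ν = k.succ <;> simp [Pi.single_apply, hν] <;> ring
    have hsum : ∑ ν : Fin (d + 1), X ν * pderiv ν (X k.succ * f)
        = X k.succ * f + X k.succ * ∑ ν : Fin (d+1), X ν * pderiv ν f := by
      simp only [h, Finset.sum_add_distrib, Finset.sum_ite_eq', Finset.mem_univ, if_true,
        Finset.mul_sum]
    simp only [XL0, XLk, hsum, smul_add, mul_add, mul_smul_comm]
    rw [mul_left_comm]
    abel
  · intro k l f
    simp only [XLk]
    ring
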